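/- arXiv:1709.09477 — 5 statements merged into one kernel-verified Lean document; each statement's English description precedes it below -/
import Mathlib

section
/- Let M be a symmetric n×n real matrix with all entries in [0,1] such that every row sum of M is at most d, and let k ≥ 3 be an integer. Then the sum, over all k-tuples (i_1,…,i_k) of pairwise distinct indices in {1,…,n}, of the products M_{i_1 i_2}·M_{i_2 i_3}···M_{i_{k-1} i_k}·M_{i_k i_1}, is at most rank(M)·d^k. Consequently, if a random graph G on n vertices is formed by including each edge {i,j} independently with probability M_{ij}, the expected number of k-cycles in G is at most rank(M)·d^k. -/
/-! Expanding the trace over closed walks gives `tr (M ^ k) = ∑_f ∏_i M (f i) (f (i + 1))` over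
all `f : Fin k → Fin n`, a sum of nonnegative terms that contains the one over injective `f`.
As `M` is symmetric, `tr (M ^ k) = ∑ λ ^ k` over its eigenvalues, exactly `rank M` of which are
nonzero, and Gershgorin's theorem bounds each `|λ|` by the maximal row sum `d`.

For `k ≥ 3` the `k` edges `{f i, f (i + 1)}` of an injective tuple are pairwise distinct, so by
independence the whole cycle is present with probability `∏_i M (f i) (f (i + 1))`; the
expected number of `k`-cycles is therefore the sum above divided by `2 k`. -/

open MeasureTheory

/-- The Bernoulli measure on `Bool` with success probability `p` (clamped to `[0,1]`). -/
noncomputable def bernMeasure (p : ℝ) : Measure Bool :=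
  (PMF.bernoulli (min (Real.toNNReal p) 1) (min_le_right _ _)).toMeasure

/-- The inhomogeneous Erdős–Rényi random graph measure: each potential edge
`{i,j}` (indexed by ordered pairs `i < j`) is present independently with
probability `M i j`. -/
noncomputable def erMeasure (n : ℕ) (M : Matrix (Fin n) (Fin n) ℝ) :
    Measure ({p : Fin n × Fin n // p.1 < p.2} → Bool) :=
  Measure.pi fun p => bernMeasure (M p.1.1 p.1.2)

/-- Adjacency in the sampled graph: `i ≠ j` and the indicator of the pair `{i,j}`
is on. -/
def erAdj {n : ℕ} (ω : {p : Fin n × Fin n // p.1 < p.2} → Bool) (i j : Fin n) :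
    Prop :=
  ∃ p : {p : Fin n × Fin n // p.1 < p.2}, ω p = true ∧
    ((p.1.1 = i ∧ p.1.2 = j) ∨ (p.1.1 = j ∧ p.1.2 = i))

instance {n : ℕ} (ω : {p : Fin n × Fin n // p.1 < p.2} → Bool) (i j : Fin n) :
    Decidable (erAdj ω i j) := by unfold erAdj; infer_instance

/-- The number of `k`-cycles of the sampled graph: the number of injective maps
`f : Fin k → Fin n` with `f(i) ~ f(i+1)` cyclically, divided by `2k` (each
`k`-cycle subgraph corresponds to exactly `2k` such ordered tuples). -/
noncomputable def kCycleCount (n k : ℕ) (hk : 0 < k)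
    (ω : {p : Fin n × Fin n // p.1 < p.2} → Bool) : ℝ :=
  (((Finset.univ : Finset (Fin k → Fin n)).filter (fun f =>
      Function.Injective f ∧
      ∀ i : Fin k, erAdj ω (f i) (f ⟨(i.1 + 1) % k, Nat.mod_lt _ hk⟩))).card : ℝ)
    / (2 * k)



open Finset

namespace Matrix

variable {n : Type*} [Fintype n] [DecidableEq n]

-- `Fin.cons a g` and `Fin.snoc g b` list the walk `a, g 0, …, g (m - 1), b` without its last,
-- resp. first, vertex, so the `i`-th factor is the weight of its `i`-th step.
theorem pow_succ_apply_eq_sum_prod {R : Type*} [CommSemiring R] (M : Matrix n n R) (m : ℕ)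
    (a b : n) :
    (M ^ (m + 1)) a b = ∑ g : Fin m → n,
      ∏ i, M (Fin.cons (α := fun _ ↦ n) a g i) (Fin.snoc (α := fun _ ↦ n) g b i) := by
  induction m generalizing a with
  | zero => simp [Fin.snoc]
  | succ m ih =>
    rw [pow_succ', mul_apply, ← (Fin.consEquiv fun _ ↦ n).sum_comp, Fintype.sum_prod_type]
    refine sum_congr rfl fun c _ ↦ ?_
    simp only [ih, mul_sum, Fin.consEquiv, Equiv.coe_fn_mk, Fin.prod_univ_succ, Fin.cons_zero,
      Fin.cons_succ, ← Fin.cons_snoc_eq_snoc_cons]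

theorem trace_pow_eq_sum_prod {R : Type*} [CommSemiring R] (M : Matrix n n R) (k : ℕ)
    [NeZero k] : (M ^ k).trace = ∑ f : Fin k → n, ∏ i, M (f i) (f (i + 1)) := by
  obtain ⟨m, rfl⟩ := Nat.exists_eq_succ_of_ne_zero (NeZero.ne k)
  have hrot (f : Fin (m + 1) → n) (i : Fin (m + 1)) :
      Fin.snoc (α := fun _ ↦ n) (Fin.tail f) (f 0) i = f (i + 1) := by
    induction i using Fin.lastCases with
    | last => simp
    | cast j => simp [Fin.tail, Fin.coeSucc_eq_succ]
  rw [← (Fin.consEquiv fun _ ↦ n).sum_comp, Fintype.sum_prod_type, trace]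
  refine sum_congr rfl fun a _ ↦ ?_
  rw [diag_apply, pow_succ_apply_eq_sum_prod]
  refine sum_congr rfl fun g _ ↦ ?_
  simp only [Fin.consEquiv, Equiv.coe_fn_mk, ← hrot, Fin.tail_cons, Fin.cons_zero]

theorem IsHermitian.trace_pow_eq_sum_eigenvalues_pow {𝕜 : Type*} [RCLike 𝕜]
    {A : Matrix n n 𝕜} (hA : A.IsHermitian) (k : ℕ) :
    (A ^ k).trace = ∑ i, (hA.eigenvalues i : 𝕜) ^ k := by
  conv_lhs => rw [hA.spectral_theorem, ← map_pow, Unitary.conjStarAlgAut_apply,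
    trace_mul_cycle, Unitary.coe_star_mul_self, one_mul, diagonal_pow, trace_diagonal]
  simp

theorem norm_le_of_hasEigenvalue {K : Type*} [NormedField K] {A : Matrix n n K} {μ : K} {d : ℝ}
    (hrow : ∀ i, ∑ j, ‖A i j‖ ≤ d) (hμ : Module.End.HasEigenvalue (toLin' A) μ) : ‖μ‖ ≤ d := by
  obtain ⟨k, hk⟩ := eigenvalue_mem_ball hμ
  rw [mem_closedBall_iff_norm] at hk
  calc ‖μ‖ ≤ ‖A k k‖ + ‖μ - A k k‖ := norm_le_norm_add_norm_sub' _ _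
    _ ≤ ‖A k k‖ + ∑ j ∈ univ.erase k, ‖A k j‖ := by gcongr
    _ = ∑ j, ‖A k j‖ := add_sum_erase _ (fun j ↦ ‖A k j‖) (mem_univ k)
    _ ≤ d := hrow k

theorem IsHermitian.trace_pow_le_rank_mul {A : Matrix n n ℝ} (hA : A.IsHermitian) {d : ℝ}
    (hrow : ∀ i, ∑ j, |A i j| ≤ d) {k : ℕ} (hk : k ≠ 0) : (A ^ k).trace ≤ A.rank * d ^ k := by
  have heig (i : n) : |hA.eigenvalues i| ≤ d := by
    refine norm_le_of_hasEigenvalue hrow (Module.End.hasEigenvalue_of_hasEigenvector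
      (x := WithLp.ofLp (hA.eigenvectorBasis i)) ⟨?_, ?_⟩)
    · rw [Module.End.mem_eigenspace_iff, toLin'_apply, hA.mulVec_eigenvectorBasis]
    · simpa using hA.eigenvectorBasis.orthonormal.ne_zero i
  have hpow (i : n) : hA.eigenvalues i ^ k ≤ if hA.eigenvalues i = 0 then 0 else d ^ k := by
    split_ifs with h
    · simp [h, hk]
    · calc hA.eigenvalues i ^ k ≤ |hA.eigenvalues i| ^ k := by
            rw [← abs_pow]; exact le_abs_self _
        _ ≤ d ^ k := pow_le_pow_left₀ (abs_nonneg _) (heig i) k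
  calc (A ^ k).trace = ∑ i, hA.eigenvalues i ^ k := hA.trace_pow_eq_sum_eigenvalues_pow k
    _ ≤ ∑ i, if hA.eigenvalues i = 0 then 0 else d ^ k := sum_le_sum fun i _ ↦ hpow i
    _ = A.rank * d ^ k := by
      rw [sum_ite, sum_const_zero, zero_add, sum_const, nsmul_eq_mul,
        hA.rank_eq_card_non_zero_eigs, Fintype.card_subtype]

end Matrix

theorem sum_cycle_prod_le_rank_mul_pow {n : Type*} [Fintype n] [DecidableEq n]
    {M : Matrix n n ℝ} (hsymm : M.IsSymm) (hnn : ∀ i j, 0 ≤ M i j) {d : ℝ}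
    (hrow : ∀ i, ∑ j, M i j ≤ d) (k : ℕ) [NeZero k] (S : Finset (Fin k → n)) :
    ∑ f ∈ S, ∏ i, M (f i) (f (i + 1)) ≤ M.rank * d ^ k :=
  calc ∑ f ∈ S, ∏ i, M (f i) (f (i + 1))
      ≤ ∑ f : Fin k → n, ∏ i, M (f i) (f (i + 1)) :=
        sum_le_sum_of_subset_of_nonneg (subset_univ S) fun _ _ _ ↦ prod_nonneg fun _ _ ↦ hnn _ _
    _ = (M ^ k).trace := (M.trace_pow_eq_sum_prod k).symm
    _ ≤ M.rank * d ^ k :=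
        (Matrix.isHermitian_iff_isSymm.2 hsymm).trace_pow_le_rank_mul
          (by simpa only [abs_of_nonneg (hnn _ _)] using hrow) (NeZero.ne k)

namespace Fin

variable {k : ℕ} [NeZero k]

theorem mk_add_one_mod (i : Fin k) (h : (i.1 + 1) % k < k) : (⟨(i.1 + 1) % k, h⟩ : Fin k) = i + 1 :=
  Fin.ext (by rw [val_add, val_one', Nat.add_mod_mod])

theorem add_one_ne_self (hk : 2 ≤ k) (i : Fin k) : i + 1 ≠ i := by
  rw [Ne, add_eq_left, Fin.ext_iff, val_one', val_zero, Nat.mod_eq_of_lt hk]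
  exact one_ne_zero

theorem add_one_add_one_ne_self (hk : 3 ≤ k) (i : Fin k) : i + 1 + 1 ≠ i := by
  rw [Ne, add_assoc, add_eq_left, Fin.ext_iff, val_add, val_one', val_zero,
    Nat.mod_eq_of_lt (by omega : 1 < k), Nat.mod_eq_of_lt (by omega : 2 < k)]
  exact two_ne_zero

end Fin

section SortedPair

variable {α : Type*} [LinearOrder α]

def sortedPair {i j : α} (h : i ≠ j) : {p : α × α // p.1 < p.2} :=
  ⟨(min i j, max i j), min_lt_max.2 h⟩

theorem eq_sortedPair_iff {i j : α} (h : i ≠ j) (p : {p : α × α // p.1 < p.2}) :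
    p = sortedPair h ↔ (p.1.1 = i ∧ p.1.2 = j) ∨ (p.1.1 = j ∧ p.1.2 = i) := by
  obtain ⟨⟨a, b⟩, hab⟩ := p
  simp only [sortedPair, Subtype.mk.injEq, Prod.mk.injEq]
  grind

theorem sortedPair_eq_sortedPair {i j i' j' : α} {h : i ≠ j} {h' : i' ≠ j'}
    (hp : sortedPair h = sortedPair h') : (i = i' ∧ j = j') ∨ (i = j' ∧ j = i') := by
  simp only [sortedPair, Subtype.mk.injEq, Prod.mk.injEq] at hp
  grind

theorem Matrix.IsSymm.apply_sortedPair {R : Type*} {M : Matrix α α R} (hM : M.IsSymm) {i j : α}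
    (h : i ≠ j) : M (sortedPair h).1.1 (sortedPair h).1.2 = M i j := by
  rcases le_total i j with hij | hij
  · simp [sortedPair, hij]
  · simp [sortedPair, hij, hM.apply i j]

theorem injective_sortedPair_cycle {k : ℕ} [NeZero k] (hk : 3 ≤ k) {f : Fin k → α}
    (hf : f.Injective) (hne : ∀ i, f i ≠ f (i + 1)) :
    Function.Injective fun i ↦ sortedPair (hne i) := by
  intro i j hij
  rcases sortedPair_eq_sortedPair hij with ⟨h, -⟩ | ⟨h, h'⟩
  · exact hf h
  · obtain rfl := hf h
    exact absurd (hf h') (Fin.add_one_add_one_ne_self hk j)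

end SortedPair

theorem MeasureTheory.Measure.pi_setOf_forall_comp_mem {ι κ α : Type*} [Fintype ι] [Fintype κ]
    [MeasurableSpace α] (μ : ι → Measure α) [∀ i, IsProbabilityMeasure (μ i)] {e : κ → ι}
    (he : e.Injective) (s : κ → Set α) :
    Measure.pi μ {ω | ∀ j, ω (e j) ∈ s j} = ∏ j, μ (e j) (s j) := by
  have hset : {ω : ι → α | ∀ j, ω (e j) ∈ s j} =
      Set.univ.pi fun i ↦ {a | ∀ j, e j = i → a ∈ s j} := by
    ext ω
    simpa using ⟨fun h _ j hj ↦ hj ▸ h j, fun h j ↦ h _ j rfl⟩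
  rw [hset, Measure.pi_pi]
  refine (Fintype.prod_of_injective e he _ _ (fun i hi ↦ ?_) (fun j ↦ ?_)).symm
  · have : {a : α | ∀ j, e j = i → a ∈ s j} = Set.univ := by
      ext a
      simpa using fun j hj ↦ absurd ⟨j, hj⟩ hi
    rw [this, measure_univ]
  · congr 1
    ext a
    simpa using ⟨fun h j' hj' ↦ he hj' ▸ h, fun h ↦ h j rfl⟩

instance (p : ℝ) : IsProbabilityMeasure (bernMeasure p) :=
  PMF.toMeasure.isProbabilityMeasure _

instance (n : ℕ) (M : Matrix (Fin n) (Fin n) ℝ) : IsProbabilityMeasure (erMeasure n M) := by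
  unfold erMeasure; infer_instance

theorem bernMeasure_singleton_true {p : ℝ} (hp : p ≤ 1) :
    bernMeasure p {true} = ENNReal.ofReal p := by
  rw [bernMeasure, PMF.toMeasure_apply_singleton _ _ (measurableSet_singleton _), PMF.bernoulli]
  show ((min p.toNNReal 1 : NNReal) : ENNReal) = ENNReal.ofReal p
  rw [min_eq_left (Real.toNNReal_le_one.2 hp)]
  rfl

theorem erAdj_iff {n : ℕ} (ω : {p : Fin n × Fin n // p.1 < p.2} → Bool) {i j : Fin n}
    (h : i ≠ j) : erAdj ω i j ↔ ω (sortedPair h) = true := by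
  simp only [erAdj, ← eq_sortedPair_iff h, exists_eq_right]

theorem measureReal_setOf_cycle {n k : ℕ} [NeZero k] (hk : 3 ≤ k)
    {M : Matrix (Fin n) (Fin n) ℝ} (hsymm : M.IsSymm) (h01 : ∀ i j, M i j ∈ Set.Icc (0 : ℝ) 1)
    {f : Fin k → Fin n} (hf : f.Injective) :
    (erMeasure n M).real {ω | ∀ i, erAdj ω (f i) (f (i + 1))} = ∏ i, M (f i) (f (i + 1)) := by
  have hne (i : Fin k) : f i ≠ f (i + 1) := hf.ne (Fin.add_one_ne_self (by omega) i).symm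
  have hset : {ω | ∀ i, erAdj ω (f i) (f (i + 1))} =
      {ω | ∀ i, ω (sortedPair (hne i)) ∈ ({true} : Set Bool)} := by
    simp only [erAdj_iff _ (hne _), Set.mem_singleton_iff]
  rw [hset, measureReal_def, erMeasure,
    Measure.pi_setOf_forall_comp_mem _ (injective_sortedPair_cycle hk hf hne), ENNReal.toReal_prod]
  refine prod_congr rfl fun i _ ↦ ?_
  rw [bernMeasure_singleton_true (h01 _ _).2, hsymm.apply_sortedPair,
    ENNReal.toReal_ofReal (h01 _ _).1]

theorem integral_kCycleCount {n k : ℕ} [NeZero k] (hk : 3 ≤ k) {M : Matrix (Fin n) (Fin n) ℝ}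
    (hsymm : M.IsSymm) (h01 : ∀ i j, M i j ∈ Set.Icc (0 : ℝ) 1) :
    ∫ ω, kCycleCount n k (NeZero.pos k) ω ∂erMeasure n M =
      (∑ f ∈ (univ : Finset (Fin k → Fin n)).filter Function.Injective,
        ∏ i, M (f i) (f (i + 1))) / (2 * k) := by
  have hcount (ω) : kCycleCount n k (NeZero.pos k) ω =
      (∑ f ∈ (univ : Finset (Fin k → Fin n)).filter Function.Injective,
        {ω | ∀ i : Fin k, erAdj ω (f i) (f (i + 1))}.indicator 1 ω) / (2 * k) := by
    rw [kCycleCount, ← filter_filter, card_filter, Nat.cast_sum]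
    simp [Fin.mk_add_one_mod, Set.indicator_apply]
  simp_rw [hcount]
  rw [integral_div, integral_finsetSum _ fun _ _ ↦ Integrable.of_finite]
  congr 1
  refine sum_congr rfl fun f hf ↦ ?_
  rw [integral_indicator_one (Set.toFinite _).measurableSet,
    measureReal_setOf_cycle hk hsymm h01 (mem_filter.1 hf).2]

/-- Let `M` be a symmetric `n×n` matrix with entries in `[0,1]` and
every row sum at most `d`, and let `k ≥ 3`.  Then the sum over all `k`-tuples of
pairwise distinct indices of `M_{i_1 i_2}···M_{i_k i_1}` is at most
`rank(M)·d^k`; consequently, the expected number of `k`-cycles of the random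
graph obtained by including each edge `{i,j}` independently with probability
`M_{ij}` is at most `rank(M)·d^k`. -/
theorem stochastic_block_cycle_bound (n k : ℕ) (hk : 3 ≤ k) (d : ℝ)
    (M : Matrix (Fin n) (Fin n) ℝ) (hsymm : M.IsSymm)
    (h01 : ∀ i j, M i j ∈ Set.Icc (0 : ℝ) 1)
    (hrow : ∀ i, ∑ j, M i j ≤ d) :
    (∑ f ∈ (Finset.univ : Finset (Fin k → Fin n)).filter Function.Injective,
        ∏ i : Fin k, M (f i) (f ⟨(i.1 + 1) % k, Nat.mod_lt _ (by omega)⟩))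
      ≤ (M.rank : ℝ) * d ^ k ∧
    (∫ ω, kCycleCount n k (by omega) ω ∂(erMeasure n M))
      ≤ (M.rank : ℝ) * d ^ k := by
  have : NeZero k := ⟨by omega⟩
  have hnn (i j : Fin n) : 0 ≤ M i j := (h01 i j).1
  have hcycles :=
    sum_cycle_prod_le_rank_mul_pow hsymm hnn hrow k (univ.filter Function.Injective)
  simp only [Fin.mk_add_one_mod]
  refine ⟨hcycles, ?_⟩
  rw [integral_kCycleCount hk hsymm h01]
  refine (div_le_self (sum_nonneg fun _ _ ↦ prod_nonneg fun _ _ ↦ hnn _ _) ?_).trans hcycles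
  have : (3 : ℝ) ≤ k := by exact_mod_cast hk
  linarith
end

section
/- Let H be a finite simple graph with E ≥ 1 edges, T triangles, and F four-cycles, and set r_3 = T/E and r_4 = F/E. Then 3·r_3·(3·r_3 − 1) ≤ 4·r_4; equivalently, 3T(3T − E) ≤ 4FE. -/
/-- The number of ordered 4-tuples `(a,b,c,d)` of pairwise distinct vertices with
`a~b, b~c, c~d, d~a`.  Each four-cycle subgraph corresponds to exactly 8 such
tuples, so the number of four-cycles of `G` is this quantity divided by 8. -/
def orderedFourCycleCount {V : Type*} [Fintype V] [DecidableEq V]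
    (G : SimpleGraph V) [DecidableRel G.Adj] : ℕ :=
  ((Finset.univ : Finset (V × V × V × V)).filter
    (fun p => p.1 ≠ p.2.1 ∧ p.1 ≠ p.2.2.1 ∧ p.1 ≠ p.2.2.2 ∧
      p.2.1 ≠ p.2.2.1 ∧ p.2.1 ≠ p.2.2.2 ∧ p.2.2.1 ≠ p.2.2.2 ∧
      G.Adj p.1 p.2.1 ∧ G.Adj p.2.1 p.2.2.1 ∧ G.Adj p.2.2.1 p.2.2.2 ∧
      G.Adj p.2.2.2 p.1)).card

/-!
For an ordered edge `uv` let `c(u, v)` be the number of common neighbours of `u` and `v`.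
Summed over the `2E` ordered edges, `c` counts every triangle six times, so `∑ c = 6T`.
The square `c(u, v)²` counts ordered pairs `(x, y)` of common neighbours: the `c(u, v)` pairs
with `x = y`, and pairs with `x ≠ y`, each of which yields the ordered four-cycle `u x v y`;
hence `∑ c² ≤ 6T + 8F`. Cauchy–Schwarz gives `(6T)² ≤ 2E · (6T + 8F)`, which is the claim.
-/

open Finset

namespace SimpleGraph

section AdjPairs

variable {V : Type*} [Fintype V] (G : SimpleGraph V) [DecidableRel G.Adj]

def adjPairs : Finset (V × V) := {p | G.Adj p.1 p.2}

@[simp]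
lemma mem_adjPairs {p : V × V} : p ∈ G.adjPairs ↔ G.Adj p.1 p.2 := by
  simp [adjPairs]

lemma card_adjPairs : #G.adjPairs = 2 * #G.edgeFinset := by
  rw [← dart_card_eq_twice_card_edges, ← card_univ,
    ← card_map ⟨Dart.toProd, Dart.toProd_injective⟩]
  congr 1
  ext ⟨u, v⟩
  simp only [mem_map, mem_univ, true_and, mem_adjPairs, Function.Embedding.coeFn_mk]
  exact ⟨fun h => ⟨⟨(u, v), h⟩, rfl⟩, by rintro ⟨⟨_, h⟩, rfl⟩; exact h⟩

end AdjPairs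

variable {V : Type*} [Fintype V] [DecidableEq V] (G : SimpleGraph V) [DecidableRel G.Adj]

def commonNeighborFinset (u v : V) : Finset V := G.neighborFinset u ∩ G.neighborFinset v

@[simp]
lemma mem_commonNeighborFinset {u v w : V} :
    w ∈ G.commonNeighborFinset u v ↔ G.Adj u w ∧ G.Adj v w := by
  simp [commonNeighborFinset]

variable {G} in
lemma card_filter_cliqueFinset_three_offDiag {u v : V} (huv : G.Adj u v) :
    #{t ∈ G.cliqueFinset 3 | (u, v) ∈ t.offDiag} = #(G.commonNeighborFinset u v) := by
  symm
  refine card_nbij (fun w => {u, v, w}) ?maps ?inj ?surj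
  · intro w hw
    rw [mem_coe, mem_commonNeighborFinset] at hw
    simpa [is3Clique_triple_iff, huv, hw.1, hw.2] using huv.ne
  · intro w hw w' hw' h
    rw [mem_coe, mem_commonNeighborFinset] at hw hw'
    have : w ∈ ({u, v, w'} : Finset V) := by
      simp only at h
      simp [← h]
    simp only [mem_insert, mem_singleton] at this
    rcases this with rfl | rfl | rfl
    exacts [(hw.1.ne rfl).elim, (hw.2.ne rfl).elim, rfl]
  · intro t ht
    simp only [coe_filter, mem_cliqueFinset_iff, mem_offDiag, Set.mem_ofPred_eq] at ht
    obtain ⟨htc, hu, hv, -⟩ := ht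
    have hvu : v ∈ t.erase u := mem_erase.2 ⟨huv.ne.symm, hv⟩
    obtain ⟨w, hw⟩ : ∃ w, (t.erase u).erase v = {w} := by
      rw [← card_eq_one, card_erase_of_mem hvu, card_erase_of_mem hu, htc.card_eq]
    have hwt : w ∈ (t.erase u).erase v := hw ▸ mem_singleton_self w
    simp only [mem_erase] at hwt
    refine ⟨w, ?_, ?_⟩
    · rw [mem_coe, mem_commonNeighborFinset]
      exact ⟨htc.1 hu hwt.2.2 hwt.2.1.symm, htc.1 hv hwt.2.2 hwt.1.symm⟩
    · change {u, v, w} = t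
      rw [← hw, insert_erase hvu, insert_erase hu]

lemma sum_card_commonNeighborFinset :
    ∑ p ∈ G.adjPairs, #(G.commonNeighborFinset p.1 p.2) = 6 * #(G.cliqueFinset 3) := by
  let r : Finset V → V × V → Prop := fun t p => p ∈ t.offDiag
  calc ∑ p ∈ G.adjPairs, #(G.commonNeighborFinset p.1 p.2)
      = ∑ p ∈ G.adjPairs, #((G.cliqueFinset 3).bipartiteBelow r p) :=
        sum_congr rfl fun p hp => (card_filter_cliqueFinset_three_offDiag
          (G.mem_adjPairs.1 hp)).symm
    _ = ∑ t ∈ G.cliqueFinset 3, #(G.adjPairs.bipartiteAbove r t) :=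
        (sum_card_bipartiteAbove_eq_sum_card_bipartiteBelow r).symm
    _ = ∑ t ∈ G.cliqueFinset 3, 6 := by
        refine sum_congr rfl fun t ht => ?_
        have htc := mem_cliqueFinset_iff.1 ht
        have hsub : t.offDiag ⊆ G.adjPairs := fun p hp => by
          obtain ⟨h1, h2, hne⟩ := mem_offDiag.1 hp
          exact G.mem_adjPairs.2 (htc.1 h1 h2 hne)
        rw [bipartiteAbove, filter_mem_eq_inter, inter_eq_right.2 hsub, offDiag_card,
          htc.card_eq]
    _ = 6 * #(G.cliqueFinset 3) := by rw [sum_const, smul_eq_mul, mul_comm]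

lemma sum_card_offDiag_commonNeighborFinset_le :
    ∑ p ∈ G.adjPairs, #(G.commonNeighborFinset p.1 p.2).offDiag ≤ orderedFourCycleCount G := by
  rw [← card_sigma, orderedFourCycleCount]
  refine card_le_card_of_injOn (fun q => (q.1.1, q.2.1, q.1.2, q.2.2)) ?_ ?_
  · rintro ⟨⟨u, v⟩, ⟨x, y⟩⟩ hq
    simp only [coe_sigma, Set.mem_sigma_iff, mem_coe, mem_adjPairs, mem_offDiag,
      mem_commonNeighborFinset] at hq
    obtain ⟨huv, ⟨hux, hvx⟩, ⟨huy, hvy⟩, hxy⟩ := hq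
    simp only [coe_filter, mem_univ, true_and, Set.mem_ofPred_eq]
    exact ⟨hux.ne, huv.ne, huy.ne, hvx.ne.symm, hxy, hvy.ne, hux, hvx.symm, hvy, huy.symm⟩
  · rintro ⟨⟨u, v⟩, ⟨x, y⟩⟩ - ⟨⟨u', v'⟩, ⟨x', y'⟩⟩ - h
    simp only [Prod.mk.injEq] at h
    obtain ⟨rfl, rfl, rfl, rfl⟩ := h
    rfl

theorem sq_six_mul_card_triangles_le :
    (6 * #(G.cliqueFinset 3)) ^ 2 ≤
      2 * #G.edgeFinset * (6 * #(G.cliqueFinset 3) + orderedFourCycleCount G) := by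
  have hsq (s : Finset V) : #s ^ 2 = #s + #s.offDiag := by
    rw [offDiag_card, sq]
    have := Nat.le_mul_self #s
    omega
  calc (6 * #(G.cliqueFinset 3)) ^ 2
      = (∑ p ∈ G.adjPairs, #(G.commonNeighborFinset p.1 p.2)) ^ 2 := by
        rw [sum_card_commonNeighborFinset]
    _ ≤ #G.adjPairs * ∑ p ∈ G.adjPairs, #(G.commonNeighborFinset p.1 p.2) ^ 2 :=
        sq_sum_le_card_mul_sum_sq
    _ ≤ 2 * #G.edgeFinset * (6 * #(G.cliqueFinset 3) + orderedFourCycleCount G) := by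
        simp_rw [card_adjPairs, hsq]
        rw [sum_add_distrib, sum_card_commonNeighborFinset]
        gcongr
        exact sum_card_offDiag_commonNeighborFinset_le G

end SimpleGraph

theorem triangle_fourcycle_ratio_ineq_general {V : Type*} [Fintype V] [DecidableEq V]
    (H : SimpleGraph V) [DecidableRel H.Adj]
    (E T F : ℝ)
    (hE : E = (H.edgeFinset.card : ℝ))
    (hT : T = ((H.cliqueFinset 3).card : ℝ))
    (hF : F = (orderedFourCycleCount H : ℝ) / 8) :
    3 * T * (3 * T - E) ≤ 4 * F * E := by
  have key : ((6 * #(H.cliqueFinset 3)) ^ 2 : ℝ) ≤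
      2 * #H.edgeFinset * (6 * #(H.cliqueFinset 3) + orderedFourCycleCount H) := by
    exact_mod_cast H.sq_six_mul_card_triangles_le
  subst hE hT hF
  linear_combination (1 / 4 : ℝ) * key

/-- Let `H` be a finite simple graph with `E ≥ 1` edges, `T`
triangles and `F` four-cycles.  Then `3T(3T − E) ≤ 4FE` (equivalently, with
`r_3 = T/E` and `r_4 = F/E`, `3r_3(3r_3 − 1) ≤ 4r_4`).  Here `T` is the number of
triangles (3-cliques) and `F` is the number of four-cycle subgraphs, i.e. the
number of ordered four-cycle tuples divided by 8. -/
theorem triangle_fourcycle_ratio_ineq {V : Type*} [Fintype V] [DecidableEq V]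
    (H : SimpleGraph V) [DecidableRel H.Adj]
    (E T F : ℝ)
    (hE : E = (H.edgeFinset.card : ℝ)) (hE1 : 1 ≤ E)
    (hT : T = ((H.cliqueFinset 3).card : ℝ))
    (hF : F = (orderedFourCycleCount H : ℝ) / 8) :
    3 * T * (3 * T - E) ≤ 4 * F * E :=
  triangle_fourcycle_ratio_ineq_general H E T F hE hT hF
end

section
/- In any finite simple graph H, the number of four-cycles of H is at least (1/2)·Σ_{e ∈ E(H)} t_e(t_e − 1)/2, where t_e denotes the number of triangles of H containing the edge e. -/
/-- For an edge `e` of `G`, the number `t_e` of triangles (3-cliques) of `G`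
containing both endpoints of `e`. -/
def edgeTriangleCount {V : Type*} [Fintype V] [DecidableEq V]
    (G : SimpleGraph V) [DecidableRel G.Adj] (e : Sym2 V) : ℕ :=
  ((G.cliqueFinset 3).filter (fun T => ∀ v ∈ e, v ∈ T)).card


/-! An ordered edge `(a, b)` together with an ordered pair `(c, c')` of distinct common
neighbours of `a` and `b` gives the ordered four-cycle `(a, c, b, c')`, and distinct such data
give distinct cycles. The triangles on the edge `ab` are exactly the sets `{a, b, c}` with `c` a
common neighbour, and every edge has two orientations, so there are at least
`2 · Σ_e t_e (t_e - 1)` ordered four-cycles. -/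

open Finset SimpleGraph

theorem Finset.cast_card_offDiag {α R : Type*} [DecidableEq α] [Ring R] (s : Finset α) :
    (#s.offDiag : R) = #s * (#s - 1) := by
  rw [offDiag_card, Nat.cast_sub (Nat.le_mul_self _), Nat.cast_mul, mul_sub_one]

namespace SimpleGraph

variable {V : Type*} [Fintype V] (G : SimpleGraph V) [DecidableRel G.Adj]

theorem sum_dart_edge_eq_two_nsmul_sum_edgeFinset {M : Type*} [AddCommMonoid M]
    (f : Sym2 V → M) : ∑ d : G.Dart, f d.edge = 2 • ∑ e ∈ G.edgeFinset, f e := by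
  classical
  rw [← sum_fiberwise_of_maps_to (g := Dart.edge) (t := G.edgeFinset) (by simp), smul_sum]
  refine sum_congr rfl fun e he => ?_
  rw [sum_congr rfl fun d hd => congrArg f (mem_filter.1 hd).2, sum_const,
    G.dart_edge_fiber_card e (mem_edgeFinset.1 he)]

end SimpleGraph

section

variable {V : Type*} [Fintype V] [DecidableEq V] (G : SimpleGraph V) [DecidableRel G.Adj]

theorem edgeTriangleCount_eq_card_inter_neighborFinset {a b : V} (hab : G.Adj a b) :
    edgeTriangleCount G s(a, b) = #(G.neighborFinset a ∩ G.neighborFinset b) := by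
  symm
  refine card_nbij (fun c => {a, b, c}) ?_ ?_ ?_
  · intro c hc
    simp only [coe_inter, Set.mem_inter_iff, mem_coe, mem_neighborFinset] at hc
    simp [is3Clique_triple_iff, hab, hc.1, hc.2]
  · intro c hc c' hc' h
    simp only [coe_inter, Set.mem_inter_iff, mem_coe, mem_neighborFinset] at hc hc'
    have hc_mem : c ∈ ({a, b, c'} : Finset V) := by simp only at h; simp [← h]
    simp only [mem_insert, mem_singleton] at hc_mem
    rcases hc_mem with rfl | rfl | rfl
    · exact absurd hc.1 G.irrefl
    · exact absurd hc.2 G.irrefl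
    · rfl
  · intro T hT
    simp only [coe_filter, mem_cliqueFinset_iff, Sym2.mem_iff, forall_eq_or_imp,
      forall_eq, Set.mem_ofPred_eq] at hT
    obtain ⟨hT, ha, hb⟩ := hT
    have hab' : ({a, b} : Finset V) ⊆ T := by simp [insert_subset_iff, ha, hb]
    obtain ⟨c, hc⟩ : ∃ c, T \ {a, b} = {c} := by
      rw [← card_eq_one, card_sdiff_of_subset hab', hT.card_eq, card_pair hab.ne]
    have hcT : c ∈ T \ {a, b} := hc ▸ mem_singleton_self c
    simp only [mem_sdiff, mem_insert, mem_singleton, not_or] at hcT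
    refine ⟨c, ?_, ?_⟩
    · simp [hT.isClique ha hcT.1 (Ne.symm hcT.2.1), hT.isClique hb hcT.1 (Ne.symm hcT.2.2)]
    · rw [← sdiff_union_of_subset hab', hc]
      ext; simp only [mem_insert, mem_union, mem_singleton]; tauto

theorem sum_dart_card_offDiag_le_orderedFourCycleCount :
    ∑ d : G.Dart, #(G.neighborFinset d.fst ∩ G.neighborFinset d.snd).offDiag
      ≤ orderedFourCycleCount G := by
  rw [← card_sigma]
  refine card_le_card_of_injOn (fun x => (x.1.fst, x.2.1, x.1.snd, x.2.2)) ?_ ?_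
  · rintro ⟨d, c, c'⟩ h
    simp only [coe_sigma, Set.mem_sigma_iff, coe_univ, Set.mem_univ, mem_coe, mem_offDiag,
      mem_inter, mem_neighborFinset, true_and] at h
    obtain ⟨⟨hac, hbc⟩, ⟨hac', hbc'⟩, hcc'⟩ := h
    simp only [coe_filter, mem_univ, true_and, Set.mem_ofPred_eq]
    exact ⟨hac.ne, d.adj.ne, hac'.ne, hbc.ne.symm, hcc', hbc'.ne, hac, hbc.symm, hbc', hac'.symm⟩
  · rintro ⟨d, c, c'⟩ - ⟨d', e, e'⟩ - h
    simp only [Prod.mk.injEq] at h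
    obtain ⟨hfst, rfl, hsnd, rfl⟩ := h
    obtain rfl : d = d' := Dart.ext _ _ (Prod.ext hfst hsnd)
    rfl

end

/-- In any finite simple graph `H`, the number of four-cycles of `H`
(the number of ordered four-cycle tuples divided by 8) is at least
`(1/2)·Σ_{e ∈ E(H)} t_e(t_e − 1)/2`, where `t_e` is the number of triangles of
`H` containing the edge `e`. -/
theorem fourcycles_ge_triangle_pairs {V : Type*} [Fintype V] [DecidableEq V]
    (H : SimpleGraph V) [DecidableRel H.Adj] :
    (1 / 2 : ℝ) * ∑ e ∈ H.edgeFinset,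
        ((edgeTriangleCount H e : ℝ) * ((edgeTriangleCount H e : ℝ) - 1) / 2)
      ≤ (orderedFourCycleCount H : ℝ) / 8 := by
  have hdart : ∀ d : H.Dart, (#(H.neighborFinset d.fst ∩ H.neighborFinset d.snd).offDiag : ℝ) =
      edgeTriangleCount H d.edge * (edgeTriangleCount H d.edge - 1) := fun d => by
    rw [cast_card_offDiag, ← edgeTriangleCount_eq_card_inter_neighborFinset H d.adj]
    rfl
  have hcycles := (Nat.cast_le (α := ℝ)).2 (sum_dart_card_offDiag_le_orderedFourCycleCount H)
  rw [Nat.cast_sum, sum_congr rfl fun d _ => hdart d,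
    sum_dart_edge_eq_two_nsmul_sum_edgeFinset H fun e =>
      (edgeTriangleCount H e : ℝ) * (edgeTriangleCount H e - 1),
    two_nsmul] at hcycles
  rw [← sum_div]
  linarith
end

section
/- Let X be a binomial random variable with parameters n ≥ 1 and p ∈ (0,1). Then E[1/X | X ≥ 1] ≤ (1/(p·(n+1)))·(1 + 3/(p·(n+2))). -/
lemma binom_sum_split (n : ℕ) (f : ℕ → ℝ) :
    ∑ i ∈ Finset.range (n+1), f i = f 0 + ∑ i ∈ Finset.Icc 1 n, f i := by
  rw [Finset.range_eq_Ico, Finset.sum_eq_sum_Ico_succ_bot (by omega), ← Finset.Ico_add_one_right_eq_Icc]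

lemma myS1 (n : ℕ) (p q : ℝ) (hpq : p + q = 1) (hp : p ≠ 0) :
    ∑ i ∈ Finset.range (n+1), (n.choose i : ℝ) * p ^ i * q ^ (n - i) * (1 / ((i:ℝ)+1))
      = (1 - q ^ (n+1)) / (((n:ℝ)+1) * p) := by
  have hn1 : ((n:ℝ)+1) * p ≠ 0 := mul_ne_zero (by positivity) hp
  rw [eq_div_iff hn1, Finset.sum_mul]
  have step : ∀ i ∈ Finset.range (n+1),
      (n.choose i : ℝ) * p ^ i * q ^ (n - i) * (1 / ((i:ℝ)+1)) * (((n:ℝ)+1) * p)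
        = ((n+1).choose (i+1) : ℝ) * p ^ (i+1) * q ^ ((n+1) - (i+1)) := by
    intro i hi
    have hc : ((n:ℝ)+1) * (n.choose i : ℝ) = ((n+1).choose (i+1) : ℝ) * ((i:ℝ)+1) := by
      exact_mod_cast congrArg (Nat.cast : ℕ → ℝ) (Nat.add_one_mul_choose_eq n i)
    have hi1 : ((i:ℝ)+1) ≠ 0 := by positivity
    rw [Nat.succ_sub_succ]
    field_simp
    linear_combination (p ^ i * q ^ (n - i) * p) * hc
  rw [Finset.sum_congr rfl step]
  have := Finset.sum_range_succ' (fun j => ((n+1).choose j : ℝ) * p ^ j * q ^ ((n+1) - j)) (n+1)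
  have hbin : ∑ j ∈ Finset.range (n+2), ((n+1).choose j : ℝ) * p ^ j * q ^ ((n+1) - j) = (p+q)^(n+1) := by
    rw [add_pow]
    exact Finset.sum_congr rfl (fun k hk => by ring)
  simp only [Nat.choose_zero_right, Nat.cast_one, pow_zero, Nat.sub_zero] at this
  rw [hbin, hpq, one_pow] at this
  linarith [this]

lemma myS2 (n : ℕ) (p q : ℝ) (hpq : p + q = 1) (hp : p ≠ 0) :
    ∑ i ∈ Finset.range (n+1), (n.choose i : ℝ) * p ^ i * q ^ (n - i) * (1 / (((i:ℝ)+1)*((i:ℝ)+2)))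
      = (1 - q ^ (n+2) - ((n:ℝ)+2) * p * q ^ (n+1)) / (((n:ℝ)+1) * (((n:ℝ)+2)) * p^2) := by
  have hn1 : ((n:ℝ)+1) * ((n:ℝ)+2) * p^2 ≠ 0 := by
    have : p^2 ≠ 0 := pow_ne_zero 2 hp
    positivity
  rw [eq_div_iff hn1, Finset.sum_mul]
  have step : ∀ i ∈ Finset.range (n+1),
      (n.choose i : ℝ) * p ^ i * q ^ (n - i) * (1 / (((i:ℝ)+1)*((i:ℝ)+2))) * (((n:ℝ)+1) * ((n:ℝ)+2) * p^2)
        = ((n+2).choose (i+2) : ℝ) * p ^ (i+2) * q ^ ((n+2) - (i+2)) := by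
    intro i hi
    have hc1 : ((n:ℝ)+1) * (n.choose i : ℝ) = ((n+1).choose (i+1) : ℝ) * ((i:ℝ)+1) := by
      exact_mod_cast congrArg (Nat.cast : ℕ → ℝ) (Nat.add_one_mul_choose_eq n i)
    have hc2 : ((n:ℝ)+2) * ((n+1).choose (i+1) : ℝ) = ((n+2).choose (i+2) : ℝ) * ((i:ℝ)+2) := by
      have h2 : (((n+1)+1) * (n+1).choose (i+1) : ℕ) = ((n+2).choose (i+2) * ((i+1)+1) : ℕ) :=
        Nat.add_one_mul_choose_eq (n+1) (i+1)
      exact_mod_cast congrArg (Nat.cast : ℕ → ℝ) h2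
    have hi1 : ((i:ℝ)+1) ≠ 0 := by positivity
    have hi2 : ((i:ℝ)+2) ≠ 0 := by positivity
    have hss : (n+2) - (i+2) = n - i := by omega
    rw [hss]
    field_simp
    linear_combination (p ^ i * q ^ (n - i) * p ^ 2) * ((((n:ℝ)+2)) * hc1 + (((i:ℝ)+1)) * hc2)
  rw [Finset.sum_congr rfl step]
  have h1 := Finset.sum_range_succ' (fun j => ((n+2).choose (j+1) : ℝ) * p ^ (j+1) * q ^ ((n+2) - (j+1))) (n+1)
  have h2 := Finset.sum_range_succ' (fun j => ((n+2).choose j : ℝ) * p ^ j * q ^ ((n+2) - j)) (n+2)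
  have hbin : ∑ j ∈ Finset.range (n+3), ((n+2).choose j : ℝ) * p ^ j * q ^ ((n+2) - j) = (p+q)^(n+2) := by
    rw [add_pow]
    exact Finset.sum_congr rfl (fun k hk => by ring)
  rw [hbin, hpq, one_pow] at h2
  have e : ∀ k:ℕ, k+1+1 = k+2 := fun k => rfl
  simp only [e, Nat.zero_add, Nat.choose_zero_right, Nat.choose_one_right, Nat.cast_one,
    pow_zero, pow_one, Nat.sub_zero, Nat.cast_add, Nat.cast_ofNat] at h1 h2
  have hsub : (n+2) - 1 = n+1 := by omega
  rw [hsub] at h1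
  linarith [h1, h2]

/-- For `X ~ Bin(n,p)` with `n ≥ 1` and `p ∈ (0,1)`,
`E[1/X | X ≥ 1] ≤ (1/(p·(n+1)))·(1 + 3/(p·(n+2)))`, where
`E[f(X) | X ≥ 1] = E[f(X)·1_{X≥1}] / P(X ≥ 1)` and `P(X ≥ 1) = 1 − (1−p)^n`. -/
theorem binomial_condexp_inv_le (n : ℕ) (hn : 1 ≤ n) (p : ℝ)
    (hp : p ∈ Set.Ioo (0 : ℝ) 1) :
    (∑ i ∈ Finset.Icc 1 n,
        (n.choose i : ℝ) * p ^ i * (1 - p) ^ (n - i) * (1 / (i : ℝ)))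
      / (1 - (1 - p) ^ n)
      ≤ (1 / (p * ((n : ℝ) + 1))) * (1 + 3 / (p * ((n : ℝ) + 2))) := by
  obtain ⟨hp0, hp1⟩ := hp
  have hq0 : (0:ℝ) < 1 - p := by linarith
  have hAlt : (1-p)^n < 1 := pow_lt_one₀ hq0.le (by linarith) (by omega)
  have hA0 : (0:ℝ) ≤ (1-p)^n := by positivity
  have hden : 0 < 1 - (1-p)^n := by linarith
  rw [div_le_iff₀ hden]
  -- termwise bound
  have hstep : (∑ i ∈ Finset.Icc 1 n, (n.choose i:ℝ)*p^i*(1-p)^(n-i)*(1/(i:ℝ)))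
      ≤ (∑ i ∈ Finset.Icc 1 n, (n.choose i:ℝ)*p^i*(1-p)^(n-i)*(1/((i:ℝ)+1)))
        + 3 * (∑ i ∈ Finset.Icc 1 n, (n.choose i:ℝ)*p^i*(1-p)^(n-i)*(1/(((i:ℝ)+1)*((i:ℝ)+2)))) := by
    have := Finset.sum_le_sum (f := fun i : ℕ => (n.choose i:ℝ)*p^i*(1-p)^(n-i)*(1/(i:ℝ)))
      (g := fun i : ℕ => (n.choose i:ℝ)*p^i*(1-p)^(n-i)*(1/((i:ℝ)+1))
            + 3 * ((n.choose i:ℝ)*p^i*(1-p)^(n-i)*(1/(((i:ℝ)+1)*((i:ℝ)+2)))))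
      (s := Finset.Icc 1 n) ?_
    · rw [Finset.sum_add_distrib, ← Finset.mul_sum] at this
      exact this
    · intro i hi
      have hi1 : 1 ≤ i := (Finset.mem_Icc.mp hi).1
      have hi' : (1:ℝ) ≤ (i:ℝ) := by exact_mod_cast hi1
      have h0 : (0:ℝ) < (i:ℝ) := by linarith
      have hco : (0:ℝ) ≤ (n.choose i:ℝ)*p^i*(1-p)^(n-i) := by positivity
      have hkey : 1/(i:ℝ) ≤ 1/((i:ℝ)+1) + 3/(((i:ℝ)+1)*((i:ℝ)+2)) := by
        rw [div_add_div _ _ (by positivity) (by positivity), div_le_div_iff₀ h0 (by positivity)]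
        nlinarith
      calc (n.choose i:ℝ)*p^i*(1-p)^(n-i)*(1/(i:ℝ))
          ≤ (n.choose i:ℝ)*p^i*(1-p)^(n-i)*(1/((i:ℝ)+1) + 3/(((i:ℝ)+1)*((i:ℝ)+2))) :=
            mul_le_mul_of_nonneg_left hkey hco
        _ = (n.choose i:ℝ)*p^i*(1-p)^(n-i)*(1/((i:ℝ)+1))
            + 3 * ((n.choose i:ℝ)*p^i*(1-p)^(n-i)*(1/(((i:ℝ)+1)*((i:ℝ)+2)))) := by ring
  -- closed forms over Icc
  have hIcc1 : ∑ i ∈ Finset.Icc 1 n, (n.choose i:ℝ)*p^i*(1-p)^(n-i)*(1/((i:ℝ)+1))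
      = (1 - (1-p)^(n+1)) / (((n:ℝ)+1)*p) - (1-p)^n := by
    have hs := myS1 n p (1-p) (by ring) hp0.ne'
    have hsp := binom_sum_split n (fun i => (n.choose i:ℝ)*p^i*(1-p)^(n-i)*(1/((i:ℝ)+1)))
    simp only [Nat.choose_zero_right, Nat.cast_one, pow_zero, Nat.sub_zero, Nat.cast_zero,
      zero_add, div_one, one_mul, mul_one] at hsp
    linarith [hs, hsp]
  have hIcc2 : ∑ i ∈ Finset.Icc 1 n, (n.choose i:ℝ)*p^i*(1-p)^(n-i)*(1/(((i:ℝ)+1)*((i:ℝ)+2)))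
      = (1 - (1-p)^(n+2) - ((n:ℝ)+2)*p*(1-p)^(n+1)) / (((n:ℝ)+1)*((n:ℝ)+2)*p^2) - (1-p)^n * (1/2) := by
    have hs := myS2 n p (1-p) (by ring) hp0.ne'
    have hsp := binom_sum_split n (fun i => (n.choose i:ℝ)*p^i*(1-p)^(n-i)*(1/(((i:ℝ)+1)*((i:ℝ)+2))))
    simp only [Nat.choose_zero_right, Nat.cast_one, pow_zero, Nat.sub_zero, Nat.cast_zero,
      zero_add, one_mul] at hsp
    linarith [hs, hsp]
  rw [hIcc1, hIcc2] at hstep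
  refine le_trans hstep ?_
  -- final algebraic inequality
  have hpow1 : (1-p)^(n+1) = (1-p)^n * (1-p) := pow_succ _ _
  have hpow2 : (1-p)^(n+2) = (1-p)^n * (1-p) * (1-p) := by
    rw [show n+2 = (n+1)+1 from rfl, pow_succ, pow_succ]
  rw [hpow1, hpow2]
  have hn1 : (1:ℝ) ≤ (n:ℝ) := by exact_mod_cast hn
  have e : (1 / (p * ((n : ℝ) + 1))) * (1 + 3 / (p * ((n : ℝ) + 2))) * (1 - (1-p)^n)
      - (((1 - (1-p)^n * (1-p)) / (((n:ℝ)+1)*p) - (1-p)^n)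
        + 3 * ((1 - (1-p)^n * (1-p) * (1-p) - ((n:ℝ)+2)*p*((1-p)^n * (1-p))) / (((n:ℝ)+1)*((n:ℝ)+2)*p^2)
          - (1-p)^n * (1/2)))
      = (1-p)^n * (p * ((n:ℝ) * (3 + p * (2.5*(n:ℝ) + 3.5)))) / (((n:ℝ)+1)*((n:ℝ)+2)*p^2) := by
    field_simp
    ring
  have hfrac : (0:ℝ) ≤ (1-p)^n * (p * ((n:ℝ) * (3 + p * (2.5*(n:ℝ) + 3.5)))) / (((n:ℝ)+1)*((n:ℝ)+2)*p^2) := by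
    positivity
  linarith [e, hfrac]
end

section
/- Let X be a binomial random variable with parameters n ≥ 1 and p ∈ (0,1). Then E[1/((X+1)(X+2)) | X ≥ 1] ≤ 1/(p^2·(n+1)·(n+2)). -/
/-!
Write `q = 1 - p`. Since `(n + 1)(n + 2) C(n, i) = C(n + 2, i + 2)(i + 1)(i + 2)`, multiplying the
`i`-th term of the numerator by `p²(n + 1)(n + 2)` gives `P(Y = i + 2)` for `Y ~ Bin(n + 2, p)`.
So the numerator times `p²(n + 1)(n + 2)` is `P(Y ≥ 3) = 1 - P(Y ≤ 2)`, and
`P(Y ≤ 2) = qⁿ (q² + (n + 2)pq + C(n + 2, 2)p²) ≥ qⁿ (q + p)² = qⁿ`, so it is at most `1 - qⁿ = P(X ≥ 1)`.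
-/

open Finset

theorem Nat.add_one_mul_add_two_mul_choose (n i : ℕ) :
    (n + 1) * (n + 2) * n.choose i = (n + 2).choose (i + 2) * ((i + 1) * (i + 2)) := by
  calc (n + 1) * (n + 2) * n.choose i = (n + 2) * ((n + 1) * n.choose i) := by ring
    _ = (n + 1 + 1) * (n + 1).choose (i + 1) * (i + 1) := by
      rw [Nat.add_one_mul_choose_eq]; ring
    _ = (n + 2).choose (i + 2) * ((i + 1) * (i + 2)) := by
      rw [Nat.add_one_mul_choose_eq]; ring

theorem choose_mul_pow_div_mul_eq_choose_add_two {K : Type*} [Field K] [CharZero K]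
    (n i : ℕ) (p q : K) :
    (n.choose i : K) * p ^ i * q ^ (n - i) * (1 / ((i + 1) * (i + 2))) *
        (p ^ 2 * (n + 1) * (n + 2)) =
      (n + 2).choose (i + 2) * p ^ (i + 2) * q ^ (n - i) := by
  have key : ((n + 1) * (n + 2) * n.choose i : K) =
      (n + 2).choose (i + 2) * ((i + 1) * (i + 2)) := by
    exact_mod_cast Nat.add_one_mul_add_two_mul_choose n i
  have hi₁ : (i : K) + 1 ≠ 0 := by exact_mod_cast i.succ_ne_zero
  have hi₂ : (i : K) + 2 ≠ 0 := by exact_mod_cast (i + 1).succ_ne_zero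
  field_simp
  linear_combination p ^ (i + 2) * q ^ (n - i) * key

theorem Finset.sum_Icc_one_comp_add_two {M : Type*} [AddCommGroup M] (f : ℕ → M) (n : ℕ) :
    ∑ i ∈ Icc 1 n, f (i + 2) = ∑ k ∈ range (n + 3), f k - (f 0 + f 1 + f 2) := by
  induction n with
  | zero => simp [sum_range_succ]
  | succ n ih =>
    rw [sum_Icc_succ_top (by omega), ih, sum_range_succ _ (n + 3)]
    abel

theorem sum_Icc_choose_add_two_mul_pow {R : Type*} [CommRing R] (n : ℕ) (p q : R) :
    ∑ i ∈ Icc 1 n, ((n + 2).choose (i + 2) : R) * p ^ (i + 2) * q ^ (n - i) =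
      (p + q) ^ (n + 2) -
        (q ^ (n + 2) + (n + 2) * p * q ^ (n + 1) + (n + 2).choose 2 * p ^ 2 * q ^ n) := by
  set g : ℕ → R := fun k => p ^ k * q ^ (n + 2 - k) * (n + 2).choose k
  calc _ = ∑ i ∈ Icc 1 n, g (i + 2) := by
        refine sum_congr rfl fun i _ => ?_
        simp only [g, Nat.add_sub_add_right]
        ring
    _ = _ := by
        rw [sum_Icc_one_comp_add_two, add_pow]
        simp only [g, pow_zero, tsub_zero, one_mul, Nat.choose_zero_right, Nat.cast_one, mul_one,
          pow_one, Nat.add_one_sub_one, Nat.choose_one_right, Nat.cast_add, Nat.cast_ofNat,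
          add_tsub_cancel_right]
        ring

theorem pow_le_binomial_head {n : ℕ} {p q : ℝ} (hp : 0 ≤ p) (hq : 0 ≤ q) (hpq : p + q = 1) :
    q ^ n ≤ q ^ (n + 2) + (n + 2) * p * q ^ (n + 1) + (n + 2).choose 2 * p ^ 2 * q ^ n := by
  have hC : (1 : ℝ) ≤ (n + 2).choose 2 := by exact_mod_cast Nat.choose_pos (by omega)
  have h : q ^ (n + 2) + (n + 2) * p * q ^ (n + 1) + (n + 2).choose 2 * p ^ 2 * q ^ n - q ^ n =
      q ^ n * (n * p * q + ((n + 2).choose 2 - 1) * p ^ 2 + ((p + q) ^ 2 - 1)) := by ring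
  rw [hpq, one_pow, sub_self, add_zero] at h
  have := sub_nonneg.2 hC
  have : 0 ≤ q ^ n * (n * p * q + ((n + 2).choose 2 - 1) * p ^ 2) := by positivity
  linarith

theorem binomial_condexp_inv_succ_mul_le_general (n : ℕ) (p : ℝ)
    (hp : p ∈ Set.Ioo (0 : ℝ) 1) :
    (∑ i ∈ Finset.Icc 1 n,
        (n.choose i : ℝ) * p ^ i * (1 - p) ^ (n - i) *
          (1 / (((i : ℝ) + 1) * ((i : ℝ) + 2))))
      / (1 - (1 - p) ^ n)
      ≤ 1 / (p ^ 2 * ((n : ℝ) + 1) * ((n : ℝ) + 2)) := by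
  obtain ⟨hp₀, hp₁⟩ := hp
  have hc : 0 < p ^ 2 * ((n : ℝ) + 1) * ((n : ℝ) + 2) := by positivity
  have hq : 0 ≤ 1 - (1 - p) ^ n := sub_nonneg.2 (pow_le_one₀ (by linarith) (by linarith))
  refine div_le_of_le_mul₀ hq (by positivity) ?_
  rw [one_div_mul_eq_div, le_div_iff₀ hc, sum_mul,
    sum_congr rfl fun i _ => choose_mul_pow_div_mul_eq_choose_add_two n i p (1 - p),
    sum_Icc_choose_add_two_mul_pow, add_sub_cancel, one_pow]
  linarith [pow_le_binomial_head (n := n) hp₀.le (by linarith) (add_sub_cancel p 1)]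

/-- For `X ~ Bin(n,p)` with `n ≥ 1` and `p ∈ (0,1)`,
`E[1/((X+1)(X+2)) | X ≥ 1] ≤ 1/(p²·(n+1)·(n+2))`, where
`E[f(X) | X ≥ 1] = E[f(X)·1_{X≥1}] / P(X ≥ 1)` and `P(X ≥ 1) = 1 − (1−p)^n`. -/
theorem binomial_condexp_inv_succ_mul_le (n : ℕ) (hn : 1 ≤ n) (p : ℝ)
    (hp : p ∈ Set.Ioo (0 : ℝ) 1) :
    (∑ i ∈ Finset.Icc 1 n,
        (n.choose i : ℝ) * p ^ i * (1 - p) ^ (n - i) *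
          (1 / (((i : ℝ) + 1) * ((i : ℝ) + 2))))
      / (1 - (1 - p) ^ n)
      ≤ 1 / (p ^ 2 * ((n : ℝ) + 1) * ((n : ℝ) + 2)) :=
  binomial_condexp_inv_succ_mul_le_general n p hp
end
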